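/- arXiv:2409.01361 — 2 statements merged into one kernel-verified Lean document; each statement's English description precedes it below -/
import Mathlib

section
/- Suppose for every z in a Borel set X ⊆ ℂ there exist a constant B ≥ 1 and a sequence of radii r_j(z) → 0 with B^{-1} r_j^δ ≤ μ(B(z, r_j)) ≤ B r_j^δ, where δ ≥ 2. If additionally the 2-dimensional Lebesgue measure of ∪_{z∈X} B(z, r(z)) can be made arbitrarily small for suitable choices r(z) ∈ {r_j(z)}, then μ(X) = 0. -/
/-!
Besicovitch splits the balls `B(z, r(z))`, `z ∈ X`, into `N` disjoint subfamilies that together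
cover `X`, with `N` depending only on `ℂ`. Since `δ ≥ 2` and `r(z) ≤ 1`, the upper mass bound gives
`μ(B(z, r(z))) ≤ B r(z)² = (B/π) λ₂(B(z, r(z)))`, so each disjoint subfamily has `μ`-mass at most
`(B/π) γ`, whence `μ(X) ≤ N (B/π) γ` for every `γ > 0`.
-/

open MeasureTheory Metric Set Filter Topology Real
open scoped ENNReal

theorem Besicovitch.exists_disjoint_subfamilies_cover_ball {α : Type*} [MetricSpace α]
    [HasBesicovitchCovering α] :
    ∃ N : ℕ, ∀ (X : Set α) (r : α → ℝ) (R : ℝ), (∀ z ∈ X, 0 < r z) → (∀ z ∈ X, r z ≤ R) →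
      ∃ s : Fin N → Set α, (∀ i, s i ⊆ X) ∧
        (∀ i, (s i).PairwiseDisjoint fun z => ball z (r z)) ∧
        X ⊆ ⋃ i, ⋃ z ∈ s i, ball z (r z) := by
  obtain ⟨N, τ, hτ, hN⟩ := HasBesicovitchCovering.no_satelliteConfig (α := α)
  refine ⟨N, fun X r R hpos hle => ?_⟩
  let q : BallPackage X α :=
    { c := (↑), r := fun z => r z, rpos := fun z => hpos z z.2, r_bound := R,
      r_le := fun z => hle z z.2 }
  obtain ⟨s, hdisj, hcover⟩ := Besicovitch.exist_disjoint_covering_families hτ hN q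
  refine ⟨fun i => (↑) '' s i, fun i => by rintro _ ⟨z, -, rfl⟩; exact z.2, fun i => ?_, ?_⟩
  · exact (Subtype.val_injective.injOn.pairwiseDisjoint_image).2
      ((hdisj i).mono fun _ => ball_subset_closedBall)
  · intro z hz
    simpa only [biUnion_image] using hcover ⟨⟨z, hz⟩, rfl⟩

theorem measure_biUnion_ball_le_mul_of_pairwiseDisjoint {α : Type*} [PseudoMetricSpace α]
    [TopologicalSpace.SeparableSpace α] [MeasurableSpace α] [OpensMeasurableSpace α]
    {μ ν : Measure α} {s : Set α} {r : α → ℝ} {c : ℝ≥0∞} (hr : ∀ z ∈ s, 0 < r z)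
    (hs : s.PairwiseDisjoint fun z => ball z (r z))
    (hμν : ∀ z ∈ s, μ (ball z (r z)) ≤ c * ν (ball z (r z))) :
    μ (⋃ z ∈ s, ball z (r z)) ≤ c * ν (⋃ z ∈ s, ball z (r z)) := by
  have hcount : s.Countable :=
    hs.countable_of_isOpen (fun _ _ => isOpen_ball) fun z hz => nonempty_ball.2 (hr z hz)
  calc μ (⋃ z ∈ s, ball z (r z)) ≤ ∑' z : s, μ (ball z (r z)) := measure_biUnion_le μ hcount _
    _ ≤ ∑' z : s, c * ν (ball z (r z)) := ENNReal.tsum_le_tsum fun z => hμν z z.2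
    _ = c * ν (⋃ z ∈ s, ball z (r z)) := by
      rw [ENNReal.tsum_mul_left, measure_biUnion hcount hs fun _ _ => measurableSet_ball]

theorem ENNReal.ofReal_mul_rpow_le_div_pi_mul_complex_volume_ball {B δ r : ℝ} (hB : 0 ≤ B)
    (hδ : 2 ≤ δ) (hr₀ : 0 < r) (hr₁ : r ≤ 1) (z : ℂ) :
    ENNReal.ofReal (B * r ^ δ) ≤ ENNReal.ofReal (B / π) * volume (ball z r) := by
  have hrδ : r ^ δ ≤ r ^ 2 := by
    simpa only [Real.rpow_two] using Real.rpow_le_rpow_of_exponent_ge hr₀ hr₁ hδ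
  rw [Complex.volume_ball, ← ENNReal.ofReal_pow hr₀.le, ← ENNReal.ofReal_coe_nnreal,
    NNReal.coe_real_pi, ← ENNReal.ofReal_mul (by positivity), ← ENNReal.ofReal_mul (by positivity)]
  refine ENNReal.ofReal_le_ofReal ?_
  rw [div_mul_eq_mul_div, mul_div_assoc, mul_div_cancel_right₀ _ pi_ne_zero]
  exact mul_le_mul_of_nonneg_left hrδ hB

theorem ENNReal.eq_zero_of_forall_le_mul_ofReal {a K : ℝ≥0∞} (hK : K ≠ ⊤)
    (h : ∀ γ : ℝ, 0 < γ → a ≤ K * ENNReal.ofReal γ) : a = 0 := by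
  have hlim : Tendsto (fun γ => K * ENNReal.ofReal γ) (𝓝[>] 0) (𝓝 0) := by
    simpa using ENNReal.Tendsto.const_mul
      ((ENNReal.continuous_ofReal.tendsto 0).mono_left nhdsWithin_le_nhds) (Or.inr hK)
  exact nonpos_iff_eq_zero.1 (ge_of_tendsto hlim (eventually_nhdsWithin_of_forall h))

theorem measure_zero_of_ball_comparable_general (μ : Measure ℂ)
    (X : Set ℂ) (δ B : ℝ) (hδ : 2 ≤ δ) (hB : 1 ≤ B)
    (h : ∀ γ : ℝ, 0 < γ → ∃ r : ℂ → ℝ,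
      (∀ z ∈ X, 0 < r z ∧ r z ≤ 1 ∧
        ENNReal.ofReal (r z ^ δ / B) ≤ μ (Metric.ball z (r z)) ∧
        μ (Metric.ball z (r z)) ≤ ENNReal.ofReal (B * r z ^ δ)) ∧
      volume (⋃ z ∈ X, Metric.ball z (r z)) < ENNReal.ofReal γ) :
    μ X = 0 := by
  obtain ⟨N, hcover⟩ := Besicovitch.exists_disjoint_subfamilies_cover_ball (α := ℂ)
  refine ENNReal.eq_zero_of_forall_le_mul_ofReal (K := (N : ℝ≥0∞) * ENNReal.ofReal (B / π))
    (ENNReal.mul_ne_top (ENNReal.natCast_ne_top N) ENNReal.ofReal_ne_top) fun γ hγ => ?_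
  obtain ⟨r, hr, hvol⟩ := h γ hγ
  obtain ⟨s, hsX, hdisj, hXs⟩ :=
    hcover X r 1 (fun z hz => (hr z hz).1) fun z hz => (hr z hz).2.1
  have hball (z : ℂ) (hz : z ∈ X) :
      μ (ball z (r z)) ≤ ENNReal.ofReal (B / π) * volume (ball z (r z)) :=
    (hr z hz).2.2.2.trans <| ENNReal.ofReal_mul_rpow_le_div_pi_mul_complex_volume_ball
      (by linarith) hδ (hr z hz).1 (hr z hz).2.1 z
  calc μ X ≤ ∑ i, μ (⋃ z ∈ s i, ball z (r z)) :=
        (measure_mono hXs).trans (measure_iUnion_fintype_le μ _)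
    _ ≤ ∑ _i : Fin N, ENNReal.ofReal (B / π) * volume (⋃ z ∈ X, ball z (r z)) :=
        Finset.sum_le_sum fun i _ =>
          (measure_biUnion_ball_le_mul_of_pairwiseDisjoint (fun z hz => (hr z (hsX i hz)).1)
            (hdisj i) fun z hz => hball z (hsX i hz)).trans
          (mul_le_mul_right (measure_mono (biUnion_subset_biUnion_left (hsX i))) _)
    _ ≤ N * ENNReal.ofReal (B / π) * ENNReal.ofReal γ := by
        rw [Finset.sum_const, Finset.card_univ, Fintype.card_fin, nsmul_eq_mul, mul_assoc]
        gcongr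

/-- If `δ ≥ 2` and every point of `X` carries balls whose `μ`-measure is comparable to
`r^δ`, and these balls can be chosen with arbitrarily small total Lebesgue area, then
`μ(X) = 0`. -/
theorem measure_zero_of_ball_comparable (μ : Measure ℂ) [IsProbabilityMeasure μ]
    (X : Set ℂ) (hX : MeasurableSet X) (δ B : ℝ) (hδ : 2 ≤ δ) (hB : 1 ≤ B)
    (h : ∀ γ : ℝ, 0 < γ → ∃ r : ℂ → ℝ,
      (∀ z ∈ X, 0 < r z ∧ r z ≤ 1 ∧
        ENNReal.ofReal (r z ^ δ / B) ≤ μ (Metric.ball z (r z)) ∧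
        μ (Metric.ball z (r z)) ≤ ENNReal.ofReal (B * r z ^ δ)) ∧
      volume (⋃ z ∈ X, Metric.ball z (r z)) < ENNReal.ofReal γ) :
    μ X = 0 :=
  measure_zero_of_ball_comparable_general μ X δ B hδ hB h
end

section
/- Suppose μ₁ and μ₂ are δ-conformal measures satisfying μ_k(f(A)) = ∫_A |Df|^δ dμ_k for every small ball A around a point z and branch f, and that μ₁ = φ·μ₂ with Radon–Nikodym derivative φ. Then φ∘f = φ μ₂-almost everywhere on the set where |Df| ≠ 0. -/
open MeasureTheory Set
open scoped ENNReal

/-!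
Writing `g` for the Jacobian `|Df|^δ`, the conformality of `μ₂` is a change of variables
`∫_{f(B)} h dμ₂ = ∫_B g · (h ∘ f) dμ₂`. Applied to `h = φ`, and compared with the conformality of
`μ₁ = φ μ₂`, it gives `∫_B g · (φ ∘ f) dμ₂ = ∫_B g · φ dμ₂` for every Borel `B ⊆ U`, so
`g · (φ ∘ f) = g · φ` a.e. on `U`, and `g` can be cancelled since `0 < g < ∞` there.
-/

namespace MeasureTheory

variable {α : Type*} [MeasurableSpace α]

/-- `g` is the Jacobian of `f` on `s` with respect to `ν`. -/
def HasJacobianOn (ν : Measure α) (f : α → α) (g : α → ℝ≥0∞) (s : Set α) : Prop :=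
  ∀ B, MeasurableSet B → B ⊆ s → ν (f '' B) = ∫⁻ z in B, g z ∂ν

namespace HasJacobianOn

variable {ν ν₁ ν₂ : Measure α} {f f' : α → α} {g : α → ℝ≥0∞} {s : Set α}

theorem congr (hν : HasJacobianOn ν f g s) (hff' : EqOn f f' s) : HasJacobianOn ν f' g s :=
  fun B hB hBs => (hff'.mono hBs).image_eq ▸ hν B hB hBs

theorem map_withDensity_restrict (hν : HasJacobianOn ν f g s) (hf : Measurable f)
    (hs : MeasurableSet s) : ((ν.restrict s).withDensity g).map f = ν.restrict (f '' s) := by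
  ext A hA
  rw [Measure.map_apply hf hA, withDensity_apply _ (hf hA), Measure.restrict_restrict (hf hA),
    ← hν _ ((hf hA).inter hs) inter_subset_right, image_preimage_inter,
    Measure.restrict_apply hA]

variable [StandardBorelSpace α]

theorem setLIntegral_image (hν : HasJacobianOn ν f g s)
    (hf : Measurable f) (hinj : InjOn f s) (hs : MeasurableSet s) (hg : Measurable g)
    {h : α → ℝ≥0∞} (hh : Measurable h) {B : Set α} (hB : MeasurableSet B) (hBs : B ⊆ s) :
    ∫⁻ z in f '' B, h z ∂ν = ∫⁻ z in B, g z * h (f z) ∂ν := by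
  have hfB : MeasurableSet (f '' B) := hB.image_of_measurable_injOn hf (hinj.mono hBs)
  calc ∫⁻ z in f '' B, h z ∂ν = ∫⁻ z in f '' B, h z ∂(ν.restrict (f '' s)) := by
        rw [Measure.restrict_restrict_of_subset (image_mono hBs)]
    _ = ∫⁻ z in f '' B, h z ∂(((ν.restrict s).withDensity g).map f) := by
        rw [hν.map_withDensity_restrict hf hs]
    _ = ∫⁻ z in f ⁻¹' (f '' B), g z * h (f z) ∂(ν.restrict s) := by
        rw [setLIntegral_map hfB hh hf]
        exact setLIntegral_withDensity_eq_setLIntegral_mul _ hg (hh.comp hf) (hf hfB)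
    _ = ∫⁻ z in B, g z * h (f z) ∂ν := by
        rw [Measure.restrict_restrict (hf hfB), hinj.preimage_image_inter hBs]

variable {φ : α → ℝ≥0∞}

theorem setLIntegral_mul_comp_eq_of_eq_withDensity (h₁ : HasJacobianOn ν₁ f g s)
    (h₂ : HasJacobianOn ν₂ f g s) (hf : Measurable f) (hinj : InjOn f s) (hs : MeasurableSet s)
    (hg : Measurable g) (hφ : Measurable φ) (hν : ν₁ = ν₂.withDensity φ) {B : Set α}
    (hB : MeasurableSet B) (hBs : B ⊆ s) :
    ∫⁻ z in B, g z * φ (f z) ∂ν₂ = ∫⁻ z in B, g z * φ z ∂ν₂ := by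
  have hfB : MeasurableSet (f '' B) := hB.image_of_measurable_injOn hf (hinj.mono hBs)
  calc ∫⁻ z in B, g z * φ (f z) ∂ν₂ = ν₁ (f '' B) := by
        rw [← h₂.setLIntegral_image hf hinj hs hg hφ hB hBs, hν, withDensity_apply _ hfB]
    _ = ∫⁻ z in B, g z * φ z ∂ν₂ := by
        rw [h₁ B hB hBs, hν, setLIntegral_withDensity_eq_setLIntegral_mul _ hφ hg hB]
        exact lintegral_congr fun z => mul_comm _ _

theorem ae_comp_eq_of_eq_withDensity [SigmaFinite (ν₂.restrict s)] (h₁ : HasJacobianOn ν₁ f g s)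
    (h₂ : HasJacobianOn ν₂ f g s) (hf : Measurable f) (hinj : InjOn f s) (hs : MeasurableSet s)
    (hg : Measurable g) (hg₀ : ∀ z ∈ s, g z ≠ 0) (hg_top : ∀ z ∈ s, g z ≠ ∞)
    (hφ : Measurable φ) (hν : ν₁ = ν₂.withDensity φ) :
    ∀ᵐ z ∂(ν₂.restrict s), φ (f z) = φ z := by
  have hmul : (fun z => g z * φ (f z)) =ᵐ[ν₂.restrict s] fun z => g z * φ z := by
    refine ae_eq_of_forall_setLIntegral_eq_of_sigmaFinite₀
      (hg.mul (hφ.comp hf)).aemeasurable (hg.mul hφ).aemeasurable fun B hB _ => ?_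
    rw [Measure.restrict_restrict hB]
    exact setLIntegral_mul_comp_eq_of_eq_withDensity h₁ h₂ hf hinj hs hg hφ hν (hB.inter hs)
      inter_subset_right
  filter_upwards [ae_restrict_mem hs, hmul] with z hz hz_mul
  exact (ENNReal.mul_right_inj (hg₀ z hz) (hg_top z hz)).mp hz_mul

end HasJacobianOn

end MeasureTheory

theorem radon_nikodym_invariance_general (U : Set ℂ) (hU : IsOpen U) (f : ℂ → ℂ)
    (hf : DifferentiableOn ℂ f U) (hinj : Set.InjOn f U)
    (hDf : ∀ z ∈ U, deriv f z ≠ 0) (δ : ℝ)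
    (μ₁ μ₂ : Measure ℂ) [IsFiniteMeasure μ₂]
    (φ : ℂ → ENNReal) (hφ : Measurable φ) (hRN : μ₁ = μ₂.withDensity φ)
    (hconf₁ : ∀ B : Set ℂ, MeasurableSet B → B ⊆ U →
      μ₁ (f '' B) = ∫⁻ z in B, ENNReal.ofReal (‖deriv f z‖ ^ δ) ∂μ₁)
    (hconf₂ : ∀ B : Set ℂ, MeasurableSet B → B ⊆ U →
      μ₂ (f '' B) = ∫⁻ z in B, ENNReal.ofReal (‖deriv f z‖ ^ δ) ∂μ₂) :
    ∀ᵐ z ∂(μ₂.restrict U), φ (f z) = φ z := by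
  classical
  -- `f` need not be measurable off `U`; replace it there by `0`.
  set F := U.piecewise f 0
  have hFf : EqOn F f U := U.piecewise_eqOn f 0
  have hF : Measurable F :=
    hf.continuousOn.measurable_piecewise continuousOn_const hU.measurableSet
  have hg : Measurable fun z => ENNReal.ofReal (‖deriv f z‖ ^ δ) :=
    ((measurable_deriv f).norm.pow_const δ).ennreal_ofReal
  have hg₀ : ∀ z ∈ U, ENNReal.ofReal (‖deriv f z‖ ^ δ) ≠ 0 := fun z hz =>
    (ENNReal.ofReal_pos.mpr (Real.rpow_pos_of_pos (norm_pos_iff.mpr (hDf z hz)) δ)).ne'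
  have hinvariant := HasJacobianOn.ae_comp_eq_of_eq_withDensity
    (HasJacobianOn.congr hconf₁ hFf.symm) (HasJacobianOn.congr hconf₂ hFf.symm) hF
    (hinj.congr hFf.symm) hU.measurableSet hg hg₀ (fun _ _ => ENNReal.ofReal_ne_top) hφ hRN
  filter_upwards [ae_restrict_mem hU.measurableSet, hinvariant] with z hz hFz
  rwa [← hFf hz]

/-- Invariance of the Radon–Nikodym derivative under a conformal branch: if
`μ₁ = φ·μ₂` and both measures satisfy `μ_k(f(B)) = ∫_B |Df|^δ dμ_k` for all Borel
`B ⊆ U`, with `Df ≠ 0` on `U`, then `φ ∘ f = φ` `μ₂`-a.e. on `U`. -/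
theorem radon_nikodym_invariance (U : Set ℂ) (hU : IsOpen U) (f : ℂ → ℂ)
    (hf : DifferentiableOn ℂ f U) (hinj : Set.InjOn f U)
    (hDf : ∀ z ∈ U, deriv f z ≠ 0) (δ : ℝ) (hδ : 0 < δ)
    (μ₁ μ₂ : Measure ℂ) [IsFiniteMeasure μ₁] [IsFiniteMeasure μ₂]
    (φ : ℂ → ENNReal) (hφ : Measurable φ) (hRN : μ₁ = μ₂.withDensity φ)
    (hconf₁ : ∀ B : Set ℂ, MeasurableSet B → B ⊆ U →
      μ₁ (f '' B) = ∫⁻ z in B, ENNReal.ofReal (‖deriv f z‖ ^ δ) ∂μ₁)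
    (hconf₂ : ∀ B : Set ℂ, MeasurableSet B → B ⊆ U →
      μ₂ (f '' B) = ∫⁻ z in B, ENNReal.ofReal (‖deriv f z‖ ^ δ) ∂μ₂) :
    ∀ᵐ z ∂(μ₂.restrict U), φ (f z) = φ z :=
  radon_nikodym_invariance_general U hU f hf hinj hDf δ μ₁ μ₂ φ hφ hRN hconf₁ hconf₂
end
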